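/- arXiv:0806.4093 — 3 statements merged into one kernel-verified Lean document; each statement's English description precedes it below -/
import Mathlib

section
/- Let (H, *, ≻, Δ) be an infinitesimal Hoch-bialgebra over a field K. If x and y are primitive elements of H (i.e. Δ(x) = 0 and Δ(y) = 0), then the element x ≻ y − x * y is primitive. -/
open scoped TensorProduct

theorem comul_apply_of_infinitesimal_of_primitive {K G : Type*} [CommSemiring K] [AddCommMonoid G]
    [Module K G] (μ : G →ₗ[K] G →ₗ[K] G) (Δ : G →ₗ[K] G ⊗[K] G)
    (hΔμ : ∀ x y : G, Δ (μ x y)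
        = LinearMap.lTensor G (μ.flip y) (Δ x)
          + LinearMap.rTensor G (μ x) (Δ y) + x ⊗ₜ[K] y)
    {x y : G} (hx : Δ x = 0) (hy : Δ y = 0) :
    Δ (μ x y) = x ⊗ₜ[K] y := by
  rw [hΔμ, hx, hy, map_zero, map_zero, zero_add, zero_add]

theorem stmt8_general (K : Type*) [Field K] (G : Type*) [AddCommGroup G] [Module K G]
    (m s : G →ₗ[K] G →ₗ[K] G)
    (Δ : G →ₗ[K] G ⊗[K] G)
    (hΔs : ∀ x y : G, Δ (s x y)
        = LinearMap.lTensor G (s.flip y) (Δ x)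
          + LinearMap.rTensor G (s x) (Δ y) + x ⊗ₜ[K] y)
    (hΔm : ∀ x y : G, Δ (m x y)
        = LinearMap.lTensor G (m.flip y) (Δ x)
          + LinearMap.rTensor G (m x) (Δ y) + x ⊗ₜ[K] y)
    (x y : G) (hx : Δ x = 0) (hy : Δ y = 0) :
    Δ (s x y - m x y) = 0 := by
  rw [map_sub, comul_apply_of_infinitesimal_of_primitive s Δ hΔs hx hy,
    comul_apply_of_infinitesimal_of_primitive m Δ hΔm hx hy, sub_self]

/-- In an infinitesimal Hoch-bialgebra `(G, m, s, Δ)`, if `x` and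
`y` are primitive then `x ≻ y − x * y` is primitive. -/
theorem stmt8 (K : Type*) [Field K] (G : Type*) [AddCommGroup G] [Module K G]
    (m s : G →ₗ[K] G →ₗ[K] G)
    (hassoc : ∀ x y z : G, m (m x y) z = m x (m y z))
    (hcocycle : ∀ x y z : G,
      m (s x y) z + s (m x y) z = s x (m y z) + m x (s y z))
    (Δ : G →ₗ[K] G ⊗[K] G)
    (hcoassoc : ∀ x : G,
      (TensorProduct.assoc K G G G) (LinearMap.rTensor G Δ (Δ x))
        = LinearMap.lTensor G Δ (Δ x))
    (hΔs : ∀ x y : G, Δ (s x y)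
        = LinearMap.lTensor G (s.flip y) (Δ x)
          + LinearMap.rTensor G (s x) (Δ y) + x ⊗ₜ[K] y)
    (hΔm : ∀ x y : G, Δ (m x y)
        = LinearMap.lTensor G (m.flip y) (Δ x)
          + LinearMap.rTensor G (m x) (Δ y) + x ⊗ₜ[K] y)
    (x y : G) (hx : Δ x = 0) (hy : Δ y = 0) :
    Δ (s x y - m x y) = 0 :=
  stmt8_general K G m s Δ hΔs hΔm x y hx hy
end

section
/- Let (H, *, ≻, Δ) be an infinitesimal Hoch-bialgebra over a field K. For every n ≥ 3, if x₁, …, xₙ are primitive elements of H (i.e. Δ(xᵢ) = 0 for all i), then the element [x₁, …, xₙ]ₙ := (x₁ * ⋯ * x_{n−1}) ≻ xₙ − x₁ * ((x₂ * ⋯ * x_{n−1}) ≻ xₙ) is primitive. -/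
open scoped TensorProduct

open LinearMap TensorProduct

def InfinitesimalLeibniz {R G : Type*} [CommSemiring R] [AddCommMonoid G] [Module R G]
    (Δ : G →ₗ[R] G ⊗[R] G) (μ : G →ₗ[R] G →ₗ[R] G) : Prop :=
  ∀ x y : G, Δ (μ x y) = lTensor G (μ.flip y) (Δ x) + rTensor G (μ x) (Δ y) + x ⊗ₜ[R] y

namespace InfinitesimalLeibniz

variable {R G : Type*}

section Semiring

variable [CommSemiring R] [AddCommMonoid G] [Module R G]
  {Δ : G →ₗ[R] G ⊗[R] G} {μ : G →ₗ[R] G →ₗ[R] G}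

theorem apply_of_left_primitive (h : InfinitesimalLeibniz Δ μ) {x : G} (hx : Δ x = 0)
    (y : G) : Δ (μ x y) = rTensor G (μ x) (Δ y) + x ⊗ₜ[R] y := by
  rw [h, hx, map_zero, zero_add]

theorem apply_of_right_primitive (h : InfinitesimalLeibniz Δ μ) {z : G} (hz : Δ z = 0)
    (y : G) : Δ (μ y z) = lTensor G (μ.flip z) (Δ y) + y ⊗ₜ[R] z := by
  rw [h, hz, map_zero, add_zero]

end Semiring

variable [CommRing R] [AddCommGroup G] [Module R G]
  {Δ : G →ₗ[R] G ⊗[R] G} {m s : G →ₗ[R] G →ₗ[R] G}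

/-- Both sides have coproduct `(m x ⊗ s · z) (Δ w) + x ⊗ s w z + m x w ⊗ z`: primitivity of `x`
and `z` removes every term in which `m x` and `s · z` would act on the same tensor factor. -/
theorem comul_sub_eq_zero (hm : InfinitesimalLeibniz Δ m) (hs : InfinitesimalLeibniz Δ s)
    {x z : G} (hx : Δ x = 0) (hz : Δ z = 0) (w : G) :
    Δ (s (m x w) z - m x (s w z)) = 0 := by
  have hcomm : lTensor G (s.flip z) (rTensor G (m x) (Δ w))
      = rTensor G (m x) (lTensor G (s.flip z) (Δ w)) := by
    rw [← comp_apply, lTensor_comp_rTensor, ← rTensor_comp_lTensor, comp_apply]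
  rw [map_sub, hs.apply_of_right_primitive hz, hm.apply_of_left_primitive hx,
    hm.apply_of_left_primitive hx, hs.apply_of_right_primitive hz]
  simp only [map_add, lTensor_tmul, rTensor_tmul, flip_apply, hcomm]
  abel

end InfinitesimalLeibniz

theorem stmt9_general (K : Type*) [Field K] (G : Type*) [AddCommGroup G] [Module K G]
    (m s : G →ₗ[K] G →ₗ[K] G)
    (hassoc : ∀ x y z : G, m (m x y) z = m x (m y z))
    (Δ : G →ₗ[K] G ⊗[K] G)
    (hΔs : ∀ x y : G, Δ (s x y)
        = LinearMap.lTensor G (s.flip y) (Δ x)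
          + LinearMap.rTensor G (s x) (Δ y) + x ⊗ₜ[K] y)
    (hΔm : ∀ x y : G, Δ (m x y)
        = LinearMap.lTensor G (m.flip y) (Δ x)
          + LinearMap.rTensor G (m x) (Δ y) + x ⊗ₜ[K] y)
    (x₁ a xₙ : G) (t : List G)
    (hx₁ : Δ x₁ = 0) (hxₙ : Δ xₙ = 0) :
    Δ (s (List.foldl (fun u v => m u v) x₁ (a :: t)) xₙ
        - m x₁ (s (List.foldl (fun u v => m u v) a t) xₙ)) = 0 := by
  have : Std.Associative (fun u v => m u v) := ⟨hassoc⟩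
  rw [List.foldl_cons, List.foldl_assoc]
  exact InfinitesimalLeibniz.comul_sub_eq_zero hΔm hΔs hx₁ hxₙ _

/-- In an infinitesimal Hoch-bialgebra `(G, m, s, Δ)`, for `n ≥ 3`
and primitive elements `x₁, …, xₙ` (here `x₁`, then `x₂ = a`, then the list `t`
giving `x₃, …, x_{n−1}`, then `xₙ`), the element
`[x₁,…,xₙ]ₙ = (x₁ * ⋯ * x_{n−1}) ≻ xₙ − x₁ * ((x₂ * ⋯ * x_{n−1}) ≻ xₙ)`
is primitive. -/
theorem stmt9 (K : Type*) [Field K] (G : Type*) [AddCommGroup G] [Module K G]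
    (m s : G →ₗ[K] G →ₗ[K] G)
    (hassoc : ∀ x y z : G, m (m x y) z = m x (m y z))
    (hcocycle : ∀ x y z : G,
      m (s x y) z + s (m x y) z = s x (m y z) + m x (s y z))
    (Δ : G →ₗ[K] G ⊗[K] G)
    (hcoassoc : ∀ x : G,
      (TensorProduct.assoc K G G G) (LinearMap.rTensor G Δ (Δ x))
        = LinearMap.lTensor G Δ (Δ x))
    (hΔs : ∀ x y : G, Δ (s x y)
        = LinearMap.lTensor G (s.flip y) (Δ x)
          + LinearMap.rTensor G (s x) (Δ y) + x ⊗ₜ[K] y)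
    (hΔm : ∀ x y : G, Δ (m x y)
        = LinearMap.lTensor G (m.flip y) (Δ x)
          + LinearMap.rTensor G (m x) (Δ y) + x ⊗ₜ[K] y)
    (x₁ a xₙ : G) (t : List G)
    (hx₁ : Δ x₁ = 0) (ha : Δ a = 0) (hxₙ : Δ xₙ = 0) (ht : ∀ u ∈ t, Δ u = 0) :
    Δ (s (List.foldl (fun u v => m u v) x₁ (a :: t)) xₙ
        - m x₁ (s (List.foldl (fun u v => m u v) a t) xₙ)) = 0 :=
  stmt9_general K G m s hassoc Δ hΔs hΔm x₁ a xₙ t hx₁ hxₙ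
end

section
/- Let (A, *, ≻) be a Hoch-algebra over a field K. On the unitalization A₊ := K ⊕ A, extend * and ≻ bilinearly by declaring 1 := (1, 0) a two-sided unit for both operations: (λ·1 + a) * (μ·1 + b) := λμ·1 + λb + μa + a * b and (λ·1 + a) ≻ (μ·1 + b) := λμ·1 + λb + μa + a ≻ b for λ, μ ∈ K and a, b ∈ A. Then A₊ is a unital Hoch-algebra: * is associative on A₊ with two-sided unit 1, one has x ≻ 1 = x = 1 ≻ x for all x ∈ A₊, and the Hochschild two-cocycle relation (x ≻ y) * z + (x * y) ≻ z = x ≻ (y * z) + x * (y ≻ z) holds for all x, y, z ∈ A₊. -/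
/-!
Expanding both sides by bilinearity, every identity on `K × A` splits into the terms carrying at
least one scalar component, which agree formally, and the single term in the `A`-components
alone, which is associativity of `m`, respectively the cocycle relation, on `A`.
-/

/-- The extension of a bilinear operation `f` on `A` to the unitalization
`A₊ = K × A`, making `1 = (1, 0)` a two-sided unit:
`(λ·1 + a) ∘ (μ·1 + b) = λμ·1 + λb + μa + a ∘ b`. -/
noncomputable def unitalExt {K A : Type*} [Field K] [AddCommGroup A] [Module K A]
    (f : A →ₗ[K] A →ₗ[K] A) : K × A → K × A → K × A :=
  fun p q => (p.1 * q.1, p.1 • q.2 + q.1 • p.2 + f p.2 q.2)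

section UnitalExt

variable {K A : Type*} [Field K] [AddCommGroup A] [Module K A]

@[simp]
theorem unitalExt_fst (f : A →ₗ[K] A →ₗ[K] A) (p q : K × A) :
    (unitalExt f p q).1 = p.1 * q.1 :=
  rfl

@[simp]
theorem unitalExt_snd (f : A →ₗ[K] A →ₗ[K] A) (p q : K × A) :
    (unitalExt f p q).2 = p.1 • q.2 + q.1 • p.2 + f p.2 q.2 :=
  rfl

theorem unitalExt_one_right (f : A →ₗ[K] A →ₗ[K] A) (p : K × A) :
    unitalExt f p (1, 0) = p := by
  ext <;> simp

theorem unitalExt_one_left (f : A →ₗ[K] A →ₗ[K] A) (p : K × A) :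
    unitalExt f (1, 0) p = p := by
  ext <;> simp

theorem unitalExt_assoc {m : A →ₗ[K] A →ₗ[K] A}
    (hassoc : ∀ x y z : A, m (m x y) z = m x (m y z)) (p q r : K × A) :
    unitalExt m (unitalExt m p q) r = unitalExt m p (unitalExt m q r) := by
  ext
  · simp only [unitalExt_fst]
    ring
  · simp only [unitalExt_fst, unitalExt_snd, map_add, map_smul, LinearMap.add_apply,
      LinearMap.smul_apply, hassoc]
    module

theorem unitalExt_cocycle {m s : A →ₗ[K] A →ₗ[K] A}
    (hcocycle : ∀ x y z : A, m (s x y) z + s (m x y) z = s x (m y z) + m x (s y z))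
    (p q r : K × A) :
    unitalExt m (unitalExt s p q) r + unitalExt s (unitalExt m p q) r
      = unitalExt s p (unitalExt m q r) + unitalExt m p (unitalExt s q r) := by
  ext
  · simp only [Prod.fst_add, unitalExt_fst]
    ring
  · simp only [Prod.snd_add, unitalExt_fst, unitalExt_snd, map_add, map_smul,
      LinearMap.add_apply, LinearMap.smul_apply]
    linear_combination (norm := module) hcocycle p.2 q.2 r.2

end UnitalExt

/-- If `(A, m, s)` is a Hoch-algebra over `K`, then the
unitalization `A₊ = K ⊕ A` with the extended operations is a unital
Hoch-algebra: the extended `*` is associative with two-sided unit `1 = (1,0)`,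
`1` is a two-sided unit for the extended `≻`, and the Hochschild two-cocycle
relation holds on all of `A₊`. -/
theorem stmt10 (K : Type*) [Field K] (A : Type*) [AddCommGroup A] [Module K A]
    (m s : A →ₗ[K] A →ₗ[K] A)
    (hassoc : ∀ x y z : A, m (m x y) z = m x (m y z))
    (hcocycle : ∀ x y z : A,
      m (s x y) z + s (m x y) z = s x (m y z) + m x (s y z)) :
    (∀ x y z : K × A,
      unitalExt m (unitalExt m x y) z = unitalExt m x (unitalExt m y z)) ∧
    (∀ x : K × A, unitalExt m x ((1 : K), (0 : A)) = x ∧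
      unitalExt m ((1 : K), (0 : A)) x = x) ∧
    (∀ x : K × A, unitalExt s x ((1 : K), (0 : A)) = x ∧
      unitalExt s ((1 : K), (0 : A)) x = x) ∧
    (∀ x y z : K × A,
      unitalExt m (unitalExt s x y) z + unitalExt s (unitalExt m x y) z
        = unitalExt s x (unitalExt m y z) + unitalExt m x (unitalExt s y z)) :=
  ⟨unitalExt_assoc hassoc,
    fun x => ⟨unitalExt_one_right m x, unitalExt_one_left m x⟩,
    fun x => ⟨unitalExt_one_right s x, unitalExt_one_left s x⟩,
    unitalExt_cocycle hcocycle⟩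
end
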